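/- Under the assumptions of the previous statement and with F* := liminf_k F(x_k) > −∞, the proximal gradient method satisfies min_{2≤j≤k+1} dist(0, ∂(h+g)(x_j)) ≤ k^{−1/2} √(2(F(x_1) − F*)) · (λ⁻¹ + L_{∇h}) / √(λ⁻¹ − ρ) for all k ≥ 1. -/

import Mathlib

noncomputable section
open Filter Metric Set

/-- Euclidean space ℝⁿ. -/
abbrev En (n : ℕ) := EuclideanSpace ℝ (Fin n)

/-- A proper extended-real-valued function: never `⊥` and not identically `⊤`. -/
def ProperFn {n : ℕ} (g : En n → EReal) : Prop := (∀ x, g x ≠ ⊥) ∧ ∃ x, g x ≠ ⊤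

/-- ρ-weak convexity for extended-real-valued functions: `g + (ρ/2)‖·‖²` is convex. -/
def WeaklyConvexE {n : ℕ} (ρ : ℝ) (g : En n → EReal) : Prop :=
  ∀ x y : En n, ∀ t : ℝ, 0 ≤ t → t ≤ 1 →
    g (t • x + (1 - t) • y) + (((ρ / 2) * ‖t • x + (1 - t) • y‖ ^ 2 : ℝ) : EReal)
      ≤ (t : EReal) * (g x + (((ρ / 2) * ‖x‖ ^ 2 : ℝ) : EReal))
        + ((1 - t : ℝ) : EReal) * (g y + (((ρ / 2) * ‖y‖ ^ 2 : ℝ) : EReal))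

/-- m-strong convexity for extended-real-valued functions. -/
def StronglyConvexE {n : ℕ} (m : ℝ) (f : En n → EReal) : Prop :=
  ∀ x y : En n, ∀ t : ℝ, 0 ≤ t → t ≤ 1 →
    f (t • x + (1 - t) • y) + (((m / 2) * (t * (1 - t)) * ‖x - y‖ ^ 2 : ℝ) : EReal)
      ≤ (t : EReal) * f x + ((1 - t : ℝ) : EReal) * f y

/-- ρ-weak convexity, real-valued version: `g + (ρ/2)‖·‖²` is convex. -/
def WeaklyConvexR {n : ℕ} (ρ : ℝ) (g : En n → ℝ) : Prop :=
  ConvexOn ℝ Set.univ (fun x => g x + (ρ / 2) * ‖x‖ ^ 2)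

/-- `v` is a Fréchet subgradient of the extended-real-valued `g` at `x`:
`g y ≥ g x + ⟨v, y - x⟩ + o(‖y - x‖)` as `y → x`. -/
def FSubE {n : ℕ} (g : En n → EReal) (x v : En n) : Prop :=
  ∀ ε : ℝ, 0 < ε → ∀ᶠ y in nhds x,
    g x + ((inner ℝ v (y - x) - ε * ‖y - x‖ : ℝ) : EReal) ≤ g y

/-- `v` is a Fréchet subgradient of the real-valued `g` at `x`. -/
def FSubR {n : ℕ} (g : En n → ℝ) (x v : En n) : Prop :=
  ∀ ε : ℝ, 0 < ε → ∀ᶠ y in nhds x,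
    g x + (inner ℝ v (y - x) : ℝ) - ε * ‖y - x‖ ≤ g y

/-- Moreau envelope of an extended-real-valued function. -/
def moreauE {n : ℕ} (g : En n → EReal) (μ : ℝ) (y : En n) : EReal :=
  ⨅ z, g z + (((1 / (2 * μ)) * ‖z - y‖ ^ 2 : ℝ) : EReal)

/-- Moreau envelope of a real-valued function. -/
def moreauR {n : ℕ} (g : En n → ℝ) (μ : ℝ) (y : En n) : ℝ :=
  ⨅ z, (g z + (1 / (2 * μ)) * ‖z - y‖ ^ 2)

/-- `p` is a proximal point of the extended-real-valued `g` with parameter `μ` at `y`,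
i.e. a minimizer of `z ↦ g z + (1/(2μ))‖z - y‖²`. -/
def IsProxPtE {n : ℕ} (g : En n → EReal) (μ : ℝ) (y p : En n) : Prop :=
  ∀ z, g p + (((1 / (2 * μ)) * ‖p - y‖ ^ 2 : ℝ) : EReal)
      ≤ g z + (((1 / (2 * μ)) * ‖z - y‖ ^ 2 : ℝ) : EReal)

/-- `p` is a proximal point of the real-valued `g` with parameter `μ` at `y`. -/
def IsProxPtR {n : ℕ} (g : En n → ℝ) (μ : ℝ) (y p : En n) : Prop :=
  ∀ z, g p + (1 / (2 * μ)) * ‖p - y‖ ^ 2 ≤ g z + (1 / (2 * μ)) * ‖z - y‖ ^ 2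

/-- `L`-Lipschitz continuity of a real-valued function. -/
def LipschitzR {n : ℕ} (L : ℝ) (g : En n → ℝ) : Prop := ∀ x y, |g x - g y| ≤ L * ‖x - y‖

/-- `L`-Lipschitz continuity of a map between Euclidean spaces. -/
def LipschitzMap {n m : ℕ} (L : ℝ) (f : En n → En m) : Prop :=
  ∀ x y, ‖f x - f y‖ ≤ L * ‖x - y‖

/-! The prox-gradient step `x_{k+1}` is the proximal point of `g` with parameter `λ` at the
gradient step `x_k - λ ∇h(x_k)`. As `g + ‖· - y‖²/(2λ)` is `(λ⁻¹ - ρ)`-strongly convex, the proximal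
point beats every competitor `z` by `(λ⁻¹ - ρ)/2 ‖z - x_{k+1}‖²`; taking `z = x_k` and adding the
descent lemma for `h` (where `L ≤ λ⁻¹` enters) gives the sufficient decrease
`F(x_{k+1}) + (λ⁻¹ - ρ)/2 ‖x_{k+1} - x_k‖² ≤ F(x_k)`. Optimality of the proximal point puts
`λ⁻¹(x_k - x_{k+1}) + ∇h(x_{k+1}) - ∇h(x_k)`, of norm at most `(λ⁻¹ + L)‖x_{k+1} - x_k‖`, into
`∂F(x_{k+1})`. Since `F(x_j)` decreases, `F* ≤ F(x_{k+1})`, and telescoping bounds the smallest of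
the first `k` squared steps by `2(F(x_1) - F*)/(k(λ⁻¹ - ρ))`. -/

open scoped RealInnerProductSpace Topology

section InnerProductSpace

variable {E : Type*} [NormedAddCommGroup E] [InnerProductSpace ℝ E]

theorem norm_smul_add_one_sub_smul_sq (u v : E) (t : ℝ) :
    ‖t • u + (1 - t) • v‖ ^ 2
      = t * ‖u‖ ^ 2 + (1 - t) * ‖v‖ ^ 2 - t * (1 - t) * ‖u - v‖ ^ 2 := by
  simp only [← real_inner_self_eq_norm_sq, inner_add_left, inner_add_right, inner_sub_left,
    inner_sub_right, real_inner_smul_left, real_inner_smul_right, real_inner_comm v u]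
  ring

theorem one_div_two_mul_norm_sub_sub_smul_sq {lam : ℝ} (hlam : lam ≠ 0) (v x z : E) :
    1 / (2 * lam) * ‖z - (x - lam • v)‖ ^ 2
      = ⟪v, z - x⟫ + 1 / (2 * lam) * ‖z - x‖ ^ 2 + lam / 2 * ‖v‖ ^ 2 := by
  rw [sub_sub_eq_add_sub, add_sub_right_comm, norm_add_sq_real, norm_smul, real_inner_smul_right,
    real_inner_comm, Real.norm_eq_abs, mul_pow, sq_abs]
  field_simp
  ring

theorem le_add_inner_add_sq_of_lipschitz_gradient [CompleteSpace E] {L : ℝ} {h : E → ℝ}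
    {h' : E → E} (hgrad : ∀ x, HasGradientAt h (h' x) x)
    (hlip : ∀ x y, ‖h' x - h' y‖ ≤ L * ‖x - y‖) (x y : E) :
    h y ≤ h x + ⟪h' x, y - x⟫ + L / 2 * ‖y - x‖ ^ 2 := by
  set v := y - x
  let φ : ℝ → ℝ := fun t => h (x + t • v) - t * ⟪h' x, v⟫ - L / 2 * t ^ 2 * ‖v‖ ^ 2
  have hφ' : ∀ t, HasDerivAt φ (⟪h' (x + t • v) - h' x, v⟫ - L * t * ‖v‖ ^ 2) t := by
    intro t
    have hline : HasDerivAt (fun s : ℝ => x + s • v) v t := by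
      simpa using ((hasDerivAt_id t).smul_const v).const_add x
    have := (((hgrad _).hasFDerivAt.comp_hasDerivAt t hline).sub
      ((hasDerivAt_id t).mul_const ⟪h' x, v⟫)).sub
      (((hasDerivAt_pow 2 t).const_mul (L / 2)).mul_const (‖v‖ ^ 2))
    refine this.congr_deriv ?_
    simp only [InnerProductSpace.toDual_apply_apply, inner_sub_left]
    ring
  have hanti : AntitoneOn φ (Icc 0 1) := by
    refine antitoneOn_of_deriv_nonpos (convex_Icc 0 1)
      (HasDerivAt.continuousOn fun t _ => hφ' t)
      (fun t _ => (hφ' t).differentiableAt.differentiableWithinAt) fun t ht => ?_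
    rw [interior_Icc] at ht
    rw [(hφ' t).deriv, sub_nonpos]
    calc ⟪h' (x + t • v) - h' x, v⟫ ≤ ‖h' (x + t • v) - h' x‖ * ‖v‖ := real_inner_le_norm _ _
      _ ≤ L * ‖x + t • v - x‖ * ‖v‖ := by gcongr; exact hlip _ _
      _ = L * t * ‖v‖ ^ 2 := by
        rw [add_sub_cancel_left, norm_smul, Real.norm_of_nonneg ht.1.le]; ring
  have := hanti (by norm_num) (by norm_num) zero_le_one
  simp only [φ, v, zero_smul, one_smul, add_zero, add_sub_cancel] at this
  linarith

end InnerProductSpace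

theorem add_le_of_forall_le_segment {a b D : ℝ}
    (h : ∀ t : ℝ, 0 < t → t ≤ 1 → a ≤ t * b + (1 - t) * a - t * (1 - t) * D) : a + D ≤ b := by
  have hle : ∀ᶠ t in 𝓝[>] (0 : ℝ), a + D ≤ b + t * D := by
    filter_upwards [Ioc_mem_nhdsGT zero_lt_one] with t ⟨ht0, ht1⟩
    have := h t ht0 ht1
    nlinarith
  have hlim : Tendsto (fun t : ℝ => b + t * D) (𝓝[>] 0) (𝓝 b) := by
    have : Tendsto (fun t : ℝ => b + t * D) (𝓝 0) (𝓝 (b + 0 * D)) :=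
      ((continuous_const.add (continuous_id.mul continuous_const)).tendsto 0)
    simpa using this.mono_left nhdsWithin_le_nhds
  exact ge_of_tendsto hlim hle

theorem EReal.add_coe_sub_le_of_add_coe_le {a b : EReal} {r s : ℝ} (h : a + r ≤ b + s) :
    a + ((r - s : ℝ) : EReal) ≤ b := by
  rwa [← (EReal.addLECancellable_coe s).add_le_add_iff_right, add_assoc, ← EReal.coe_add,
    _root_.sub_add_cancel]

theorem EReal.toReal_add_le_toReal_add {a b : EReal} {r s : ℝ} (ha : a ≠ ⊥) (hb : b ≠ ⊤)
    (hb' : b ≠ ⊥) (h : a + r ≤ b + s) : a ≠ ⊤ ∧ a.toReal + r ≤ b.toReal + s := by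
  lift b to ℝ using ⟨hb, hb'⟩
  have ha' : a ≠ ⊤ := by
    rintro rfl
    rw [EReal.top_add_coe, top_le_iff, ← EReal.coe_add] at h
    exact EReal.coe_ne_top _ h
  lift a to ℝ using ⟨ha', ha⟩
  exact ⟨EReal.coe_ne_top a, by exact_mod_cast h⟩

section Euclidean

variable {n : ℕ}

theorem WeaklyConvexE.toReal_le {ρ : ℝ} {g : En n → EReal} (hwc : WeaklyConvexE ρ g)
    (hb : ∀ x, g x ≠ ⊥) {z p : En n} (hz : g z ≠ ⊤) (hp : g p ≠ ⊤) {t : ℝ} (ht0 : 0 ≤ t)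
    (ht1 : t ≤ 1) :
    g (t • z + (1 - t) • p) ≠ ⊤ ∧
      (g (t • z + (1 - t) • p)).toReal
        ≤ t * (g z).toReal + (1 - t) * (g p).toReal + ρ / 2 * (t * (1 - t)) * ‖z - p‖ ^ 2 := by
  have h := hwc z p t ht0 ht1
  rw [← EReal.coe_toReal hz (hb z), ← EReal.coe_toReal hp (hb p)] at h
  norm_cast at h
  obtain ⟨hne, hle⟩ := EReal.toReal_add_le_toReal_add (hb _) (EReal.coe_ne_top _)
    (EReal.coe_ne_bot _) (h.trans_eq (add_zero _).symm)
  refine ⟨hne, ?_⟩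
  rw [EReal.toReal_coe, norm_smul_add_one_sub_smul_sq] at hle
  linarith

theorem IsProxPtE.ne_top {g : En n → EReal} {μ : ℝ} {y p z : En n} (hp : IsProxPtE g μ y p)
    (hz : g z ≠ ⊤) : g p ≠ ⊤ := by
  intro htop
  have := hp z
  rw [htop, EReal.top_add_coe, top_le_iff] at this
  exact EReal.add_ne_top hz (EReal.coe_ne_top _) this

theorem IsProxPtE.toReal_add_sq_le {ρ μ : ℝ} {g : En n → EReal} {y p z : En n}
    (hp : IsProxPtE g μ y p) (hwc : WeaklyConvexE ρ g) (hb : ∀ x, g x ≠ ⊥) (hz : g z ≠ ⊤) :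
    (g p).toReal + 1 / (2 * μ) * ‖p - y‖ ^ 2 + (μ⁻¹ - ρ) / 2 * ‖z - p‖ ^ 2
      ≤ (g z).toReal + 1 / (2 * μ) * ‖z - y‖ ^ 2 := by
  refine add_le_of_forall_le_segment fun t ht0 ht1 => ?_
  obtain ⟨hw, hg⟩ := hwc.toReal_le hb hz (hp.ne_top hz) ht0.le ht1
  have hmin := (EReal.toReal_add_le_toReal_add (hb p) hw (hb _) (hp _)).2
  rw [show t • z + (1 - t) • p - y = t • (z - y) + (1 - t) • (p - y) by module,
    norm_smul_add_one_sub_smul_sq, sub_sub_sub_cancel_right] at hmin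
  linear_combination hmin + hg

theorem FSubE.of_forall_add_inner_sub_sq_le {g : En n → EReal} {p v : En n} {c : ℝ}
    (h : ∀ z, g p + ((⟪v, z - p⟫ - c * ‖z - p‖ ^ 2 : ℝ) : EReal) ≤ g z) : FSubE g p v := by
  intro ε hε
  filter_upwards [Metric.ball_mem_nhds p (show 0 < ε / (|c| + 1) by positivity)] with z hz
  refine le_trans (add_le_add_right (EReal.coe_le_coe_iff.2 ?_) _) (h z)
  rw [mem_ball, dist_eq_norm, lt_div_iff₀ (by positivity)] at hz
  have := norm_nonneg (z - p)
  nlinarith [le_abs_self c, abs_nonneg c]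

theorem IsProxPtE.fSubE {g : En n → EReal} {μ : ℝ} {y p : En n} (hp : IsProxPtE g μ y p) :
    FSubE g p (μ⁻¹ • (y - p)) := by
  refine FSubE.of_forall_add_inner_sub_sq_le (c := 1 / (2 * μ)) fun z => ?_
  convert EReal.add_coe_sub_le_of_add_coe_le (hp z) using 3
  rw [show z - y = (z - p) + (p - y) by abel, norm_add_sq_real, real_inner_smul_left,
    ← neg_sub p y, inner_neg_left, real_inner_comm]
  ring

theorem FSubE.hasGradientAt_add {g : En n → EReal} {h : En n → ℝ} {p u a : En n}
    (hg : FSubE g p u) (hh : HasGradientAt h a p) :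
    FSubE (fun z => (h z : EReal) + g z) p (a + u) := by
  intro ε hε
  filter_upwards [hg (ε / 2) (half_pos hε),
    (hasGradientAt_iff_isLittleO.mp hh).def (half_pos hε)] with z hgz hhz
  rw [Real.norm_eq_abs, abs_le] at hhz
  calc (h p : EReal) + g p + ((⟪a + u, z - p⟫ - ε * ‖z - p‖ : ℝ) : EReal)
      = ((h p + ⟪a, z - p⟫ - ε / 2 * ‖z - p‖ : ℝ) : EReal)
          + (g p + ((⟪u, z - p⟫ - ε / 2 * ‖z - p‖ : ℝ) : EReal)) := by
        have e : ∀ (r s : ℝ) (w : EReal), (r : EReal) + (w + s) = w + ((r + s : ℝ) : EReal) :=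
          fun r s w => by rw [add_left_comm, EReal.coe_add]
        rw [add_assoc, e, e, inner_add_left]
        ring_nf
    _ ≤ h z + g z := add_le_add (EReal.coe_le_coe_iff.2 (by linarith)) hgz

theorem isProxPtE_sub_smul_of_forall_le {g : En n → EReal} {lam : ℝ} {x v p : En n}
    (hlam : lam ≠ 0)
    (hstep : ∀ z, g p + ((⟪v, p - x⟫ + 1 / (2 * lam) * ‖p - x‖ ^ 2 : ℝ) : EReal)
        ≤ g z + ((⟪v, z - x⟫ + 1 / (2 * lam) * ‖z - x‖ ^ 2 : ℝ) : EReal)) :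
    IsProxPtE g lam (x - lam • v) p := by
  have hq : ∀ z, ⟪v, z - x⟫ + 1 / (2 * lam) * ‖z - x‖ ^ 2
      = 1 / (2 * lam) * ‖z - (x - lam • v)‖ ^ 2 + -(lam / 2 * ‖v‖ ^ 2) := fun z => by
    rw [one_div_two_mul_norm_sub_sub_smul_sq hlam]
    ring
  intro z
  have := hstep z
  rw [hq, hq, EReal.coe_add, EReal.coe_add, ← add_assoc, ← add_assoc] at this
  exact (EReal.addLECancellable_coe _).add_le_add_iff_right.1 this

end Euclidean

theorem exists_mem_Icc_le_div_of_add_le {F a : ℕ → ℝ} {Fstar : ℝ} {k : ℕ} (hk : 1 ≤ k)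
    (hdec : ∀ j ∈ Finset.Icc 1 k, F (j + 1) + a j ≤ F j) (hlow : Fstar ≤ F (k + 1)) :
    ∃ j ∈ Finset.Icc 1 k, a j ≤ (F 1 - Fstar) / k := by
  have hsum : ∀ m ≤ k, ∑ j ∈ Finset.Icc 1 m, a j ≤ F 1 - F (m + 1) := by
    intro m hm
    induction m with
    | zero => simp
    | succ m ih =>
      rw [Finset.sum_Icc_succ_top (by omega)]
      linarith [ih (by omega), hdec (m + 1) (Finset.mem_Icc.2 ⟨by omega, hm⟩)]
  refine Finset.exists_le_of_sum_le ⟨1, Finset.mem_Icc.2 ⟨le_rfl, hk⟩⟩ ?_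
  rw [Finset.sum_const, Nat.card_Icc, add_tsub_cancel_right, nsmul_eq_mul,
    mul_div_cancel₀ _ (by positivity)]
  linarith [hsum k le_rfl]

theorem le_of_coe_eq_liminf_of_antitoneOn {U : ℕ → EReal} {u : ℕ → ℝ} {c : ℝ} {m i : ℕ}
    (hc : (c : EReal) = liminf U atTop) (hU : ∀ j, m ≤ j → U j = u j)
    (hu : AntitoneOn u {j | m ≤ j}) (hi : m ≤ i) : c ≤ u i := by
  refine EReal.coe_le_coe_iff.1 (hc ▸ liminf_le_of_frequently_le ?_)
  refine (eventually_atTop.2 ⟨i, fun j hj => ?_⟩).frequently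
  rw [hU j (hi.trans hj), EReal.coe_le_coe_iff]
  exact hu hi (hi.trans hj) hj

theorem mul_le_rpow_neg_half_mul_sqrt_mul_div_sqrt {C r m S k : ℝ} (hC : 0 ≤ C) (hr : 0 ≤ r)
    (hm : 0 < m) (hk : 0 < k) (h : m / 2 * r ^ 2 ≤ S / k) :
    C * r ≤ k ^ (-(1 / 2 : ℝ)) * √(2 * S) * C / √m := by
  have hr' : r ≤ √(2 * S) / (√m * √k) := by
    rw [le_div_iff₀ (by positivity), ← Real.sqrt_sq hr, ← Real.sqrt_mul hm.le,
      ← Real.sqrt_mul (sq_nonneg _)]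
    rw [le_div_iff₀ hk] at h
    exact Real.sqrt_le_sqrt (by linarith)
  calc C * r ≤ C * (√(2 * S) / (√m * √k)) := by gcongr
    _ = k ^ (-(1 / 2 : ℝ)) * √(2 * S) * C / √m := by
      rw [Real.rpow_neg hk.le, ← Real.sqrt_eq_rpow]
      field_simp

section ProxGradientStep

variable {n : ℕ} {ρ L lam : ℝ} {h : En n → ℝ} {h' : En n → En n} {g : En n → EReal} {x p : En n}

theorem prox_gradient_sufficient_decrease (hgrad : ∀ x, HasGradientAt h (h' x) x)
    (hlip : LipschitzMap L h') (hb : ∀ x, g x ≠ ⊥) (hwc : WeaklyConvexE ρ g) (hlam : lam ≠ 0)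
    (hL : L ≤ lam⁻¹) (hp : IsProxPtE g lam (x - lam • h' x) p) (hx : g x ≠ ⊤) :
    h p + (g p).toReal + (lam⁻¹ - ρ) / 2 * ‖p - x‖ ^ 2 ≤ h x + (g x).toReal := by
  have hgrowth := hp.toReal_add_sq_le hwc hb hx
  rw [one_div_two_mul_norm_sub_sub_smul_sq hlam, one_div_two_mul_norm_sub_sub_smul_sq hlam,
    norm_sub_rev x p] at hgrowth
  have hdescent := le_add_inner_add_sq_of_lipschitz_gradient hgrad hlip x p
  have hcurv : L / 2 * ‖p - x‖ ^ 2 ≤ 1 / (2 * lam) * ‖p - x‖ ^ 2 := by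
    rw [one_div, mul_inv, inv_mul_eq_div]
    gcongr
  simp only [sub_self, inner_zero_right, norm_zero] at hgrowth
  linarith

theorem prox_gradient_infDist_subdifferential_le (hgrad : ∀ x, HasGradientAt h (h' x) x)
    (hlip : LipschitzMap L h') (hlam : 0 < lam) (hp : IsProxPtE g lam (x - lam • h' x) p) :
    infDist 0 {w | FSubE (fun z => (h z : EReal) + g z) p w} ≤ (lam⁻¹ + L) * ‖p - x‖ := by
  refine (infDist_le_dist_of_mem (hp.fSubE.hasGradientAt_add (hgrad p))).trans ?_
  rw [dist_zero_left, show h' p + lam⁻¹ • (x - lam • h' x - p) = lam⁻¹ • (x - p) + (h' p - h' x) by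
    rw [smul_sub, smul_sub, smul_sub, inv_smul_smul₀ hlam.ne']; abel]
  calc ‖lam⁻¹ • (x - p) + (h' p - h' x)‖ ≤ ‖lam⁻¹ • (x - p)‖ + ‖h' p - h' x‖ := norm_add_le _ _
    _ ≤ lam⁻¹ * ‖p - x‖ + L * ‖p - x‖ := by
      rw [norm_smul, Real.norm_of_nonneg (inv_nonneg.2 hlam.le), norm_sub_rev]
      gcongr
      exact hlip p x
    _ = (lam⁻¹ + L) * ‖p - x‖ := by ring

end ProxGradientStep

theorem prox_gradient_complexity_general {d : ℕ} (ρ Lnh lam : ℝ)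
    (hρ : 0 < ρ) (hLnh : 0 < Lnh)
    (hlam0 : 0 < lam) (hlam : lam ≤ min (ρ⁻¹ / 2) Lnh⁻¹)
    (h : En d → ℝ) (h' : En d → En d) (hgrad : ∀ x, HasGradientAt h (h' x) x)
    (hhl : LipschitzMap Lnh h')
    (g : En d → EReal) (hproper : ProperFn g)
    (hwc : WeaklyConvexE ρ g)
    (x : ℕ → En d)
    (hstep : ∀ k, 1 ≤ k → ∀ z : En d,
      g (x (k + 1)) +
          ((inner ℝ (h' (x k)) (x (k + 1) - x k) +
            1 / (2 * lam) * ‖x (k + 1) - x k‖ ^ 2 : ℝ) : EReal)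
        ≤ g z +
          ((inner ℝ (h' (x k)) (z - x k) + 1 / (2 * lam) * ‖z - x k‖ ^ 2 : ℝ) : EReal))
    (hx1 : g (x 1) ≠ ⊤)
    (Fstar : ℝ)
    (hFstar : (Fstar : EReal) =
      Filter.liminf (fun k => ((h (x k) : ℝ) : EReal) + g (x k)) Filter.atTop)
    (k : ℕ) (hk : 1 ≤ k) :
    ∃ j, 2 ≤ j ∧ j ≤ k + 1 ∧
      infDist 0 {w | FSubE (fun z => ((h z : ℝ) : EReal) + g z) (x j) w}
        ≤ (k : ℝ) ^ (-(1 / 2 : ℝ)) *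
            Real.sqrt (2 * (h (x 1) + (g (x 1)).toReal - Fstar)) *
            (lam⁻¹ + Lnh) / Real.sqrt (lam⁻¹ - ρ) := by
  have hρlam : ρ < lam⁻¹ := (lt_inv_comm₀ hlam0 hρ).1 <|
    (hlam.trans (min_le_left _ _)).trans_lt (half_lt_self (inv_pos.2 hρ))
  have hLlam : Lnh ≤ lam⁻¹ := (le_inv_comm₀ hlam0 hLnh).1 (hlam.trans (min_le_right _ _))
  have hprox : ∀ j, 1 ≤ j → IsProxPtE g lam (x j - lam • h' (x j)) (x (j + 1)) :=
    fun j hj => isProxPtE_sub_smul_of_forall_le hlam0.ne' (hstep j hj)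
  have hfin : ∀ j, 1 ≤ j → g (x j) ≠ ⊤ := fun j hj =>
    Nat.le_induction hx1 (fun j hj ih => (hprox j hj).ne_top ih) j hj
  set F : ℕ → ℝ := fun j => h (x j) + (g (x j)).toReal
  have hdec : ∀ j, 1 ≤ j → F (j + 1) + (lam⁻¹ - ρ) / 2 * ‖x (j + 1) - x j‖ ^ 2 ≤ F j :=
    fun j hj => prox_gradient_sufficient_decrease hgrad hhl hproper.1 hwc hlam0.ne' hLlam
      (hprox j hj) (hfin j hj)
  have hFanti : AntitoneOn F {j | 1 ≤ j} := antitoneOn_nat_Ici_of_succ_le fun j hj => by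
    nlinarith [hdec j hj, sq_nonneg ‖x (j + 1) - x j‖]
  have hFstar_le : Fstar ≤ F (k + 1) :=
    le_of_coe_eq_liminf_of_antitoneOn hFstar
      (fun j hj => by rw [EReal.coe_add, EReal.coe_toReal (hfin j hj) (hproper.1 _)]) hFanti
      (by omega)
  obtain ⟨j, hj, hjle⟩ := exists_mem_Icc_le_div_of_add_le hk
    (fun j hj => hdec j (Finset.mem_Icc.1 hj).1) hFstar_le
  obtain ⟨hj1, hjk⟩ := Finset.mem_Icc.1 hj
  exact ⟨j + 1, by omega, by omega,
    (prox_gradient_infDist_subdifferential_le hgrad hhl hlam0 (hprox j hj1)).trans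
      (mul_le_rpow_neg_half_mul_sqrt_mul_div_sqrt (by positivity) (norm_nonneg _)
        (sub_pos.2 hρlam) (by exact_mod_cast hk) hjle)⟩

/-- complexity of the proximal gradient method:
`min_{2≤j≤k+1} dist(0, ∂(h+g)(x_j)) ≤ k^{-1/2} √(2(F(x_1) - F*)) (λ⁻¹ + L_{∇h})/√(λ⁻¹ - ρ)`. -/
theorem prox_gradient_complexity {d : ℕ} (ρ Lnh lam : ℝ)
    (hρ : 0 < ρ) (hLnh : 0 < Lnh)
    (hlam0 : 0 < lam) (hlam : lam ≤ min (ρ⁻¹ / 2) Lnh⁻¹)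
    (h : En d → ℝ) (h' : En d → En d) (hgrad : ∀ x, HasGradientAt h (h' x) x)
    (hhl : LipschitzMap Lnh h')
    (g : En d → EReal) (hproper : ProperFn g) (hlsc : LowerSemicontinuous g)
    (hwc : WeaklyConvexE ρ g)
    (x : ℕ → En d)
    (hstep : ∀ k, 1 ≤ k → ∀ z : En d,
      g (x (k + 1)) +
          ((inner ℝ (h' (x k)) (x (k + 1) - x k) +
            1 / (2 * lam) * ‖x (k + 1) - x k‖ ^ 2 : ℝ) : EReal)
        ≤ g z +
          ((inner ℝ (h' (x k)) (z - x k) + 1 / (2 * lam) * ‖z - x k‖ ^ 2 : ℝ) : EReal))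
    (hx1 : g (x 1) ≠ ⊤)
    (Fstar : ℝ)
    (hFstar : (Fstar : EReal) =
      Filter.liminf (fun k => ((h (x k) : ℝ) : EReal) + g (x k)) Filter.atTop)
    (k : ℕ) (hk : 1 ≤ k) :
    ∃ j, 2 ≤ j ∧ j ≤ k + 1 ∧
      infDist 0 {w | FSubE (fun z => ((h z : ℝ) : EReal) + g z) (x j) w}
        ≤ (k : ℝ) ^ (-(1 / 2 : ℝ)) *
            Real.sqrt (2 * (h (x 1) + (g (x 1)).toReal - Fstar)) *
            (lam⁻¹ + Lnh) / Real.sqrt (lam⁻¹ - ρ) :=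
  prox_gradient_complexity_general ρ Lnh lam hρ hLnh hlam0 hlam h h' hgrad hhl g hproper hwc x hstep
    hx1 Fstar hFstar k hk
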